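/- arXiv:1606.02808 — 2 statements merged into one kernel-verified Lean document; each statement's English description precedes it below -/
import Mathlib

section
/- Let 1.6 < b < 1.9, ε = ln 4/(3b), and let a : [0,∞) → ℝ be the 1-periodic function with a(t) = 3b for t ∈ [n, n+ε] and a(t) = 0 for t ∈ (n+ε, n+1), for each nonnegative integer n. If x is the solution of x'(t) + a(t)x(t) + b·x(⌊t⌋) = 0 with x(0) = 1, then |x(n+1)| = b(1-ε)|x(n)| for each nonnegative integer n, hence |x(n)| = (b(1-ε))^n ≥ 1.136^n, so |x(n)| → ∞: the equation is unstable. -/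
open Set Filter Real

/-!
On each interval `[n, n + 1]` the delayed term is the constant `b x(n)`, so the equation is
affine with constant coefficients on `[n, n + ε]` and on `[n + ε, n + 1]`. The choice
`ε = ln 4 / (3b)` makes the exponential decay on the first piece bring `x + x(n)/3` from
`4x(n)/3` down to `x(n)/3`, so `x(n + ε) = 0`; on the second piece `x` then decreases linearly
with slope `-b x(n)`, giving `x(n + 1) = -b(1 - ε) x(n)`. Since `b(1 - ε) = b - ln 4 / 3 > 1.136`,
the values at the integers grow geometrically.
-/

theorem ContinuousOn.eq_of_hasDerivAt_zero {f : ℝ → ℝ} {p q : ℝ} (hpq : p ≤ q)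
    (hc : ContinuousOn f (Icc p q)) (hd : ∀ t ∈ Ioo p q, HasDerivAt f 0 t) : f q = f p := by
  rcases hpq.eq_or_lt with rfl | hlt
  · rfl
  obtain ⟨c, -, hslope⟩ := exists_hasDerivAt_eq_slope f (fun _ ↦ 0) hlt hc hd
  have : f q - f p = 0 := by
    simpa [sub_ne_zero.mpr hlt.ne'] using hslope.symm
  linarith

theorem add_div_eq_exp_mul_of_hasDerivAt_affine {x : ℝ → ℝ} {k c p q : ℝ} (hk : k ≠ 0)
    (hpq : p ≤ q) (hc : ContinuousOn x (Icc p q))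
    (hd : ∀ t ∈ Ioo p q, HasDerivAt x (-(k * x t + c)) t) :
    x q + c / k = exp (-(k * (q - p))) * (x p + c / k) := by
  have hconst : exp (k * q) * (x q + c / k) = exp (k * p) * (x p + c / k) := by
    refine ContinuousOn.eq_of_hasDerivAt_zero (f := fun t ↦ exp (k * t) * (x t + c / k)) hpq
      (by fun_prop) fun t ht ↦ ?_
    have hexp : HasDerivAt (fun t ↦ exp (k * t)) (exp (k * t) * k) t := by
      simpa using ((hasDerivAt_id t).const_mul k).exp
    exact (hexp.mul ((hd t ht).add_const (c / k))).congr_deriv (by field_simp; ring)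
  rw [show -(k * (q - p)) = k * p - k * q by ring, exp_sub, div_mul_eq_mul_div,
    eq_div_iff (exp_pos _).ne']
  linear_combination hconst

theorem eq_sub_mul_of_hasDerivAt_const {x : ℝ → ℝ} {c p q : ℝ} (hpq : p ≤ q)
    (hc : ContinuousOn x (Icc p q)) (hd : ∀ t ∈ Ioo p q, HasDerivAt x (-c) t) :
    x q = x p - c * (q - p) := by
  have := ContinuousOn.eq_of_hasDerivAt_zero (f := fun t ↦ x t + c * t) hpq (by fun_prop)
    fun t ht ↦ ((hd t ht).add ((hasDerivAt_id t).const_mul c)).congr_deriv (by ring)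
  linarith

theorem floor_cast_eq_of_mem_Ioo {t : ℝ} (n : ℕ) (ht : t ∈ Ioo (n : ℝ) (n + 1)) :
    ((⌊t⌋ : ℤ) : ℝ) = n := by
  simpa using Int.floor_eq_on_Ico' (n : ℤ) t (by exact_mod_cast Ioo_subset_Ico_self ht)

theorem log_four_lt : log 4 < 1.3863 := by
  rw [log_four_eq]
  linarith [log_two_lt_d9]

theorem solution_succ_eq {b ε : ℝ} {a x : ℝ → ℝ} (hb : 0 < b)
    (hε : ε = log 4 / (3 * b)) (hε1 : ε < 1)
    (ha1 : ∀ n : ℕ, ∀ t ∈ Icc (n : ℝ) (n + ε), a t = 3 * b)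
    (ha2 : ∀ n : ℕ, ∀ t ∈ Ioo ((n : ℝ) + ε) (n + 1), a t = 0)
    (hcont : ContinuousOn x (Ici 0))
    (hsol : ∀ n : ℕ, ∀ t ∈ Ioo (n : ℝ) (n + 1), t ≠ (n : ℝ) + ε →
      HasDerivAt x (-(a t * x t + b * x ((⌊t⌋ : ℤ) : ℝ))) t) (n : ℕ) :
    x (n + 1) = -(b * (1 - ε)) * x n := by
  have hε0 : 0 < ε := by rw [hε]; exact div_pos (log_pos (by norm_num)) (by positivity)
  have hcontn : ∀ p q : ℝ, (n : ℝ) ≤ p → ContinuousOn x (Icc p q) := fun p q hp ↦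
    hcont.mono fun t ht ↦ (n.cast_nonneg.trans hp).trans ht.1
  have hzero : x (n + ε) = 0 := by
    have hdecay := add_div_eq_exp_mul_of_hasDerivAt_affine (x := x) (k := 3 * b) (c := b * x n)
      (p := n) (q := n + ε) (by positivity) (by linarith) (hcontn _ _ le_rfl) fun t ht ↦ by
        have htn : t ∈ Ioo (n : ℝ) (n + 1) := ⟨ht.1, by linarith [ht.2]⟩
        simpa [ha1 n t (Ioo_subset_Icc_self ht), floor_cast_eq_of_mem_Ioo n htn]
          using hsol n t htn ht.2.ne
    rw [show -(3 * b * (n + ε - n)) = -log 4 by rw [hε]; field_simp; ring, exp_neg,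
      exp_log (by norm_num)] at hdecay
    field_simp at hdecay
    linarith
  have hlinear := eq_sub_mul_of_hasDerivAt_const (x := x) (c := b * x n) (p := n + ε) (q := n + 1) (by linarith)
    (hcontn (n + ε) (n + 1) (by linarith)) fun t ht ↦ by
      have htn : t ∈ Ioo (n : ℝ) (n + 1) := ⟨by linarith [ht.1], ht.2⟩
      simpa [ha2 n t ht, floor_cast_eq_of_mem_Ioo n htn] using hsol n t htn ht.1.ne'
  rw [hlinear, hzero]
  ring

theorem stmt3_general (b ε : ℝ) (hb1 : 1.6 < b)
    (hε : ε = Real.log 4 / (3 * b))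
    (a x : ℝ → ℝ)
    (ha1 : ∀ n : ℕ, ∀ t ∈ Set.Icc (n : ℝ) (n + ε), a t = 3 * b)
    (ha2 : ∀ n : ℕ, ∀ t ∈ Set.Ioo ((n : ℝ) + ε) (n + 1), a t = 0)
    (hx0 : x 0 = 1)
    (hcont : ContinuousOn x (Set.Ici 0))
    (hsol : ∀ n : ℕ, ∀ t ∈ Set.Ioo (n : ℝ) (n + 1), t ≠ (n : ℝ) + ε →
      HasDerivAt x (-(a t * x t + b * x ((⌊t⌋ : ℤ) : ℝ))) t) :
    (∀ n : ℕ, |x ((n : ℝ) + 1)| = b * (1 - ε) * |x n|) ∧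
    (∀ n : ℕ, |x n| = (b * (1 - ε)) ^ n) ∧
    (∀ n : ℕ, (1.136 : ℝ) ^ n ≤ |x n|) ∧
    Filter.Tendsto (fun n : ℕ => |x n|) Filter.atTop Filter.atTop := by
  have hb : 0 < b := by linarith
  have hε1 : ε < 1 := by
    rw [hε, div_lt_one (by positivity)]
    linarith [log_four_lt]
  have hrate : (1.136 : ℝ) ≤ b * (1 - ε) := by
    rw [show b * (1 - ε) = b - log 4 / 3 by rw [hε]; field_simp]
    linarith [log_four_lt]
  have hstep (n : ℕ) : |x ((n : ℝ) + 1)| = b * (1 - ε) * |x n| := by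
    rw [solution_succ_eq hb hε hε1 ha1 ha2 hcont hsol n, abs_mul, abs_neg,
      abs_of_pos (by linarith)]
  have hpow (n : ℕ) : |x n| = (b * (1 - ε)) ^ n := by
    induction n with
    | zero => simp [hx0]
    | succ k ih => rw [Nat.cast_succ, hstep k, ih, pow_succ, mul_comm]
  refine ⟨hstep, hpow, fun n ↦ hpow n ▸ pow_le_pow_left₀ (by norm_num) hrate n, ?_⟩
  simpa only [hpow] using tendsto_pow_atTop_atTop_of_one_lt (by linarith : 1 < b * (1 - ε))

theorem stmt3 (b ε : ℝ) (hb1 : 1.6 < b) (hb2 : b < 1.9)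
    (hε : ε = Real.log 4 / (3 * b))
    (a x : ℝ → ℝ)
    (ha1 : ∀ n : ℕ, ∀ t ∈ Set.Icc (n : ℝ) (n + ε), a t = 3 * b)
    (ha2 : ∀ n : ℕ, ∀ t ∈ Set.Ioo ((n : ℝ) + ε) (n + 1), a t = 0)
    (hx0 : x 0 = 1)
    (hcont : ContinuousOn x (Set.Ici 0))
    (hsol : ∀ n : ℕ, ∀ t ∈ Set.Ioo (n : ℝ) (n + 1), t ≠ (n : ℝ) + ε →
      HasDerivAt x (-(a t * x t + b * x ((⌊t⌋ : ℤ) : ℝ))) t) :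
    (∀ n : ℕ, |x ((n : ℝ) + 1)| = b * (1 - ε) * |x n|) ∧
    (∀ n : ℕ, |x n| = (b * (1 - ε)) ^ n) ∧
    (∀ n : ℕ, (1.136 : ℝ) ^ n ≤ |x n|) ∧
    Filter.Tendsto (fun n : ℕ => |x n|) Filter.atTop Filter.atTop :=
  stmt3_general b ε hb1 hε a x ha1 ha2 hx0 hcont hsol
end

section
/- Let b = 1.8, ε = ln 4/(3b), and let a : [0,∞) → ℝ be the 1-periodic function with a(t) = 3b on [n, n+ε] and a(t) = 0.5 on (n+ε, n+1) for each nonnegative integer n. If x solves x'(t) + a(t)x(t) + b·x(⌊t⌋) = 0, then on [n, n+ε] the solution is x(t) = (4/3)x(n)e^{−3b(t−n)} − (1/3)x(n) with x(n+ε) = 0, on [n+ε, n+1] it is x(t) = 2b·x(n)(e^{−0.5(t−n−ε)} − 1), and |x(n+1)| = 2b(1 − e^{−0.5(1−ε)})|x(n)| > 1.1|x(n)|; hence the solution with x(0) = 1 satisfies |x(n)| → ∞ even though a(t) ≥ 0.5 for all t. -/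
/-!
On each `[n, n + 1)` the delayed term `b x(⌊t⌋)` is frozen at `b x(n)`, so `x` solves a linear
equation with constant coefficients on each of the two phases. The fast rate `3b` on `[n, n + ε]`
with `3bε = ln 4` drives `x` exactly to `0` at `n + ε`; on the slow phase the constant forcing
`-b x(n)` then overshoots to `x(n + 1) = -2b(1 - e^{-(1-ε)/2}) x(n)`, a factor larger than `1.1`.
-/

open Set Filter Real

theorem eq_left_of_hasDerivAt_zero {f : ℝ → ℝ} {A B : ℝ} (hc : ContinuousOn f (Icc A B))
    (hd : ∀ t ∈ Ioo A B, HasDerivAt f 0 t) : ∀ t ∈ Icc A B, f t = f A := by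
  rintro t ⟨hAt, htB⟩
  rcases hAt.eq_or_lt with rfl | hlt
  · rfl
  obtain ⟨c, -, hslope⟩ := exists_hasDerivAt_eq_slope f (fun _ => 0) hlt
    (hc.mono (Icc_subset_Icc_right htB)) fun s hs => hd s ⟨hs.1, hs.2.trans_le htB⟩
  rw [eq_div_iff (sub_pos.mpr hlt).ne', zero_mul] at hslope
  linarith

theorem eq_of_hasDerivAt_neg_mul_add {x : ℝ → ℝ} {A B α β : ℝ} (hα : α ≠ 0)
    (hc : ContinuousOn x (Icc A B)) (hd : ∀ t ∈ Ioo A B, HasDerivAt x (-(α * x t + β)) t) :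
    ∀ t ∈ Icc A B, x t = (x A + β / α) * exp (-(α * (t - A))) - β / α := by
  set g : ℝ → ℝ := fun s => (x s + β / α) * exp (α * (s - A))
  have hgc : ContinuousOn g (Icc A B) :=
    (hc.add continuousOn_const).mul (by fun_prop)
  have hgd : ∀ t ∈ Ioo A B, HasDerivAt g 0 t := by
    intro t ht
    have hexp : HasDerivAt (fun s => exp (α * (s - A))) (exp (α * (t - A)) * α) t := by
      simpa using (((hasDerivAt_id t).sub_const A).const_mul α).exp
    refine (((hd t ht).add_const (β / α)).mul hexp).congr_deriv ?_
    field_simp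
    ring
  intro t ht
  have hgt := eq_left_of_hasDerivAt_zero hgc hgd t ht
  simp only [g, sub_self, mul_zero, exp_zero, mul_one] at hgt
  rw [exp_neg, ← hgt, mul_inv_cancel_right₀ (exp_pos _).ne']
  ring

theorem intCast_floor_eq_of_mem_Ioo {n : ℕ} {t : ℝ} (ht : t ∈ Ioo (n : ℝ) (n + 1)) :
    ((⌊t⌋ : ℤ) : ℝ) = n := by
  exact_mod_cast Int.floor_eq_on_Ico' (n : ℤ) t (by exact_mod_cast Ioo_subset_Ico_self ht)

section Phases

variable {a x : ℝ → ℝ} {b ε A : ℝ}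

theorem eq_on_fast_phase (hb : b ≠ 0) (hε1 : ε ≤ 1) (ha : ∀ t ∈ Icc A (A + ε), a t = 3 * b)
    (hc : ContinuousOn x (Icc A (A + 1)))
    (hd : ∀ t ∈ Ioo A (A + 1), t ≠ A + ε → HasDerivAt x (-(a t * x t + b * x A)) t) :
    ∀ t ∈ Icc A (A + ε), x t = 4 / 3 * x A * exp (-(3 * b) * (t - A)) - 1 / 3 * x A := by
  have hd' : ∀ t ∈ Ioo A (A + ε), HasDerivAt x (-(3 * b * x t + b * x A)) t := fun t ht => by
    simpa only [ha t (Ioo_subset_Icc_self ht)] using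
      hd t ⟨ht.1, ht.2.trans_le (by linarith)⟩ ht.2.ne
  intro t ht
  rw [eq_of_hasDerivAt_neg_mul_add (mul_ne_zero three_ne_zero hb)
    (hc.mono (Icc_subset_Icc_right (by linarith))) hd' t ht, neg_mul]
  field_simp
  ring

theorem eq_zero_at_switch (hb : b ≠ 0) (hε0 : 0 ≤ ε) (hε1 : ε ≤ 1) (hlog : 3 * b * ε = log 4)
    (ha : ∀ t ∈ Icc A (A + ε), a t = 3 * b) (hc : ContinuousOn x (Icc A (A + 1)))
    (hd : ∀ t ∈ Ioo A (A + 1), t ≠ A + ε → HasDerivAt x (-(a t * x t + b * x A)) t) :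
    x (A + ε) = 0 := by
  rw [eq_on_fast_phase hb hε1 ha hc hd (A + ε) ⟨by linarith, le_rfl⟩, add_sub_cancel_left,
    neg_mul, hlog, exp_neg, exp_log (by norm_num)]
  ring

theorem eq_on_slow_phase (hε0 : 0 ≤ ε) (ha : ∀ t ∈ Ioo (A + ε) (A + 1), a t = 0.5)
    (hc : ContinuousOn x (Icc A (A + 1)))
    (hd : ∀ t ∈ Ioo A (A + 1), t ≠ A + ε → HasDerivAt x (-(a t * x t + b * x A)) t)
    (hzero : x (A + ε) = 0) :
    ∀ t ∈ Icc (A + ε) (A + 1), x t = 2 * b * x A * (exp (-0.5 * (t - A - ε)) - 1) := by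
  have hd' : ∀ t ∈ Ioo (A + ε) (A + 1), HasDerivAt x (-(0.5 * x t + b * x A)) t := fun t ht => by
    simpa only [ha t ht] using hd t ⟨by linarith [ht.1], ht.2⟩ ht.1.ne'
  intro t ht
  rw [eq_of_hasDerivAt_neg_mul_add (by norm_num) (hc.mono (Icc_subset_Icc_left (by linarith)))
    hd' t ht, hzero, show -(0.5 * (t - (A + ε))) = -0.5 * (t - A - ε) by ring]
  ring

theorem half_le_of_nonneg (hb : 0.5 ≤ 3 * b)
    (ha1 : ∀ n : ℕ, ∀ t ∈ Icc (n : ℝ) (n + ε), a t = 3 * b)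
    (ha2 : ∀ n : ℕ, ∀ t ∈ Ioo ((n : ℝ) + ε) (n + 1), a t = 0.5) {t : ℝ} (ht : 0 ≤ t) :
    0.5 ≤ a t := by
  rcases le_or_gt t (⌊t⌋₊ + ε) with hfast | hslow
  · rw [ha1 ⌊t⌋₊ t ⟨Nat.floor_le ht, hfast⟩]
    exact hb
  · rw [ha2 ⌊t⌋₊ t ⟨hslow, Nat.lt_floor_add_one t⟩]

end Phases

theorem log_four_div_lt : log 4 / (3 * 1.8) < 0.256722 := by
  have h : log 4 = 2 * log 2 := by
    rw [show (4 : ℝ) = 2 ^ 2 by norm_num, log_pow, Nat.cast_ofNat]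
  rw [h, div_lt_iff₀ (by norm_num)]
  linarith [log_two_lt_d9]

-- With `c = (1 - ε) / 2 > 0.3716`, `e^c ≥ 1 + c + c²/2 > 1.44 = 36/25`, which is what is needed.
theorem growth_factor_gt : (1.1 : ℝ) < 2 * 1.8 * (1 - exp (-0.5 * (1 - log 4 / (3 * 1.8)))) := by
  have hc : 0.371639 ≤ 0.5 * (1 - log 4 / (3 * 1.8)) := by linarith [log_four_div_lt]
  have hexp := quadratic_le_exp_of_nonneg (hc.trans' (by norm_num))
  have hinv : (exp (0.5 * (1 - log 4 / (3 * 1.8))))⁻¹ < 25 / 36 := by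
    rw [inv_lt_comm₀ (exp_pos _) (by norm_num)]
    nlinarith
  rw [neg_mul, exp_neg]
  linarith

theorem tendsto_abs_atTop_of_abs_succ_eq {u : ℕ → ℝ} {K : ℝ} (hK : 1 < K) (hu0 : u 0 ≠ 0)
    (hu : ∀ n, |u (n + 1)| = K * |u n|) : Tendsto (fun n => |u n|) atTop atTop := by
  have hpow : ∀ n, |u n| = K ^ n * |u 0| := by
    intro n
    induction n with
    | zero => simp
    | succ n ih => rw [hu, ih, pow_succ]; ring
  rw [funext hpow]
  exact (tendsto_pow_atTop_atTop_of_one_lt hK).atTop_mul_const (abs_pos.mpr hu0)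

theorem stmt4 (b ε : ℝ) (hb : b = 1.8) (hε : ε = Real.log 4 / (3 * b))
    (a x : ℝ → ℝ)
    (ha1 : ∀ n : ℕ, ∀ t ∈ Set.Icc (n : ℝ) (n + ε), a t = 3 * b)
    (ha2 : ∀ n : ℕ, ∀ t ∈ Set.Ioo ((n : ℝ) + ε) (n + 1), a t = 0.5)
    (hcont : ContinuousOn x (Set.Ici 0))
    (hsol : ∀ n : ℕ, ∀ t ∈ Set.Ioo (n : ℝ) (n + 1), t ≠ (n : ℝ) + ε →
      HasDerivAt x (-(a t * x t + b * x ((⌊t⌋ : ℤ) : ℝ))) t) :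
    (∀ n : ℕ, ∀ t ∈ Set.Icc (n : ℝ) (n + ε),
      x t = (4 / 3) * x n * Real.exp (-(3 * b) * (t - n)) - (1 / 3) * x n) ∧
    (∀ n : ℕ, x ((n : ℝ) + ε) = 0) ∧
    (∀ n : ℕ, ∀ t ∈ Set.Icc ((n : ℝ) + ε) (n + 1),
      x t = 2 * b * x n * (Real.exp (-0.5 * (t - n - ε)) - 1)) ∧
    (∀ n : ℕ, |x ((n : ℝ) + 1)| = 2 * b * (1 - Real.exp (-0.5 * (1 - ε))) * |x n|) ∧
    (1.1 : ℝ) < 2 * b * (1 - Real.exp (-0.5 * (1 - ε))) ∧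
    (∀ t ≥ (0 : ℝ), 0.5 ≤ a t) ∧
    (x 0 = 1 → Filter.Tendsto (fun n : ℕ => |x n|) Filter.atTop Filter.atTop) := by
  have hb0 : b ≠ 0 := by norm_num [hb]
  have hε0 : 0 ≤ ε := by rw [hε, hb]; positivity
  have hε1 : ε ≤ 1 := by rw [hε, hb]; linarith [log_four_div_lt]
  have hlog : 3 * b * ε = Real.log 4 := by rw [hε]; field_simp
  have hK : (1.1 : ℝ) < 2 * b * (1 - Real.exp (-0.5 * (1 - ε))) := by
    subst hb hε; exact growth_factor_gt
  have hc (n : ℕ) : ContinuousOn x (Icc (n : ℝ) (n + 1)) :=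
    hcont.mono fun s hs => (Nat.cast_nonneg n).trans hs.1
  have hd (n : ℕ) : ∀ t ∈ Ioo (n : ℝ) (n + 1), t ≠ n + ε →
      HasDerivAt x (-(a t * x t + b * x n)) t := by
    intro t ht hne
    simpa only [intCast_floor_eq_of_mem_Ioo ht] using hsol n t ht hne
  have hzero (n : ℕ) := eq_zero_at_switch hb0 hε0 hε1 hlog (ha1 n) (hc n) (hd n)
  have hslow (n : ℕ) := eq_on_slow_phase hε0 (ha2 n) (hc n) (hd n) (hzero n)
  have hstep (n : ℕ) : |x ((n : ℝ) + 1)| = 2 * b * (1 - Real.exp (-0.5 * (1 - ε))) * |x n| := by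
    rw [hslow n _ ⟨by linarith, le_rfl⟩, ← abs_of_pos (hK.trans' (by norm_num)), ← abs_mul,
      ← abs_neg]
    ring_nf
  refine ⟨fun n => eq_on_fast_phase hb0 hε1 (ha1 n) (hc n) (hd n), hzero, hslow, hstep, hK,
    fun t ht => half_le_of_nonneg (by norm_num [hb]) ha1 ha2 ht, fun hx0 => ?_⟩
  refine tendsto_abs_atTop_of_abs_succ_eq (hK.trans' (by norm_num)) (by simp [hx0]) fun n => ?_
  exact_mod_cast hstep n
end
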